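/- Let (Ω, P) be a finite probability space carrying random variables S : Ω → {0,1} with P(S=s) > 0 for s ∈ {0,1} and X : Ω → α with α finite, and for s ∈ {0,1} let p_s(x) = P(X = x | S = s). Then for any classifier c : α → {0,1}, |P(c(X)=1 | S=0) − P(c(X)=1 | S=1)| ≤ √(2 · JS(p₀, p₁)). -/

import Mathlib

open Finset

open Classical in
/-- Probability of an event on a finite probability space given by a weight function `P`. -/
noncomputable def pr {Ω : Type*} [Fintype Ω] (P : Ω → ℝ) (E : Ω → Prop) : ℝ :=
  ∑ ω, if E ω then P ω else 0

open Classical in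
/-- Kullback–Leibler divergence of finitely supported pmfs (natural logarithm),
restricted to the support of `p`. -/
noncomputable def KL {α : Type*} [Fintype α] (p q : α → ℝ) : ℝ :=
  ∑ x, if 0 < p x then p x * Real.log (p x / q x) else 0

/-- Jensen–Shannon divergence of finitely supported pmfs. -/
noncomputable def JS {α : Type*} [Fintype α] (p q : α → ℝ) : ℝ :=
  KL p (fun x => (p x + q x) / 2) / 2 + KL q (fun x => (p x + q x) / 2) / 2

/-!
Let `E = {c = 1}`, `a = p₀(E)`, `b = p₁(E)` and `m = (p₀ + p₁)/2`, so that `m(E) = (a + b)/2`.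
Lumping the outcomes into `E` and its complement can only decrease a Kullback–Leibler divergence
(log-sum inequality), and the binary Pinsker inequality bounds the lumped divergence below:
`KL(pₛ‖m) ≥ 2 (pₛ(E) - (a + b)/2)² = (a - b)²/2` for both `s`. Adding the two bounds gives
`(a - b)² ≤ 2 JS(p₀, p₁)`.
-/

open Real Set

lemma sub_le_mul_log_div {p q : ℝ} (hp : 0 ≤ p) (hq : 0 < q) : p - q ≤ p * log (p / q) :=
  calc p - q = q * (p / q - 1) := by field_simp
    _ ≤ q * (p / q * log (p / q)) := by gcongr; exact self_sub_one_le_mul_log (by positivity)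
    _ = p * log (p / q) := by field_simp

theorem Finset.log_sum_inequality {ι : Type*} (s : Finset ι) {p q : ι → ℝ}
    (hp : ∀ i ∈ s, 0 ≤ p i) (hq : ∀ i ∈ s, 0 ≤ q i) (hpq : ∀ i ∈ s, 0 < p i → 0 < q i) :
    (∑ i ∈ s, p i) * log ((∑ i ∈ s, p i) / ∑ i ∈ s, q i) ≤ ∑ i ∈ s, p i * log (p i / q i) := by
  rcases (sum_nonneg hp).eq_or_lt with hP | hP
  · rw [← hP, zero_mul]
    refine sum_nonneg fun i hi => ?_
    rw [(sum_eq_zero_iff_of_nonneg hp).1 hP.symm i hi, zero_mul]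
  obtain ⟨j, hj, hpj⟩ : ∃ j ∈ s, 0 < p j :=
    exists_lt_of_sum_lt (f := fun _ => 0) (by simpa using hP)
  set P := ∑ i ∈ s, p i
  set Q := ∑ i ∈ s, q i
  have hQ : 0 < Q := (hpq j hj hpj).trans_le (single_le_sum hq hj)
  set r := P / Q
  -- `sub_le_mul_log_div` at `q i * r`; after summing, the linear terms cancel because `Q * r = P`
  have key : ∀ i ∈ s, p i * log r + (p i - q i * r) ≤ p i * log (p i / q i) := by
    intro i hi
    rcases (hp i hi).eq_or_lt with hpi | hpi
    · rw [← hpi]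
      have : 0 ≤ q i * r := mul_nonneg (hq i hi) (by positivity)
      simpa using this
    have hqi := hpq i hi hpi
    have h := sub_le_mul_log_div hpi.le (mul_pos hqi (by positivity : 0 < r))
    rw [← div_div, log_div (by positivity) (by positivity)] at h
    linarith
  calc P * log r = ∑ i ∈ s, (p i * log r + (p i - q i * r)) := by
        rw [sum_add_distrib, sum_sub_distrib, ← sum_mul, ← sum_mul]
        simp only [r]
        field_simp
        ring
    _ ≤ ∑ i ∈ s, p i * log (p i / q i) := sum_le_sum key

lemma monotoneOn_log_sub_log_one_sub_sub_four_mul :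
    MonotoneOn (fun x => log x - log (1 - x) - 4 * x) (Ioo (0 : ℝ) 1) := by
  have hderiv : ∀ x ∈ Ioo (0 : ℝ) 1,
      HasDerivAt (fun x => log x - log (1 - x) - 4 * x) ((1 - 2 * x) ^ 2 / (x * (1 - x))) x := by
    rintro x ⟨hx0, hx1⟩
    have h := ((hasDerivAt_log hx0.ne').sub
      ((hasDerivAt_log (sub_pos.2 hx1).ne').comp x ((hasDerivAt_id x).const_sub 1))).sub
      ((hasDerivAt_id x).const_mul 4)
    refine h.congr_deriv ?_
    field_simp [(sub_pos.2 hx1).ne']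
    ring
  refine monotoneOn_of_hasDerivWithinAt_nonneg (f' := fun x => (1 - 2 * x) ^ 2 / (x * (1 - x)))
    (convex_Ioo 0 1) (fun x hx => (hderiv x hx).continuousAt.continuousWithinAt)
    (fun x hx => ?_) (fun x hx => ?_)
  · rw [interior_Ioo] at hx ⊢
    exact (hderiv x hx).hasDerivWithinAt
  · rw [interior_Ioo] at hx
    have := sub_pos.2 hx.2
    have := hx.1
    positivity

noncomputable def binaryKL (a c : ℝ) : ℝ :=
  a * log (a / c) + (1 - a) * log ((1 - a) / (1 - c))

/-- `binaryKL x c - 2 (x - c)²` for `x ∈ [0, 1]`, written via `x * log x` to be continuous. -/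
noncomputable def pinskerGap (c x : ℝ) : ℝ :=
  x * log x + (1 - x) * log (1 - x) - (x * log c + (1 - x) * log (1 - c)) - 2 * (x - c) ^ 2

lemma continuous_pinskerGap (c : ℝ) : Continuous (pinskerGap c) := by
  unfold pinskerGap
  have := continuous_mul_log.comp ((continuous_const (y := (1:ℝ))).sub continuous_id)
  fun_prop

lemma hasDerivAt_pinskerGap (c : ℝ) {x : ℝ} (hx : x ∈ Ioo (0 : ℝ) 1) :
    HasDerivAt (pinskerGap c)
      (log x - log (1 - x) - 4 * x - (log c - log (1 - c) - 4 * c)) x := by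
  have hx1 : 1 - x ≠ 0 := (sub_pos.2 hx.2).ne'
  have h := ((((hasDerivAt_mul_log hx.1.ne').add ((hasDerivAt_mul_log hx1).comp x
    ((hasDerivAt_id x).const_sub 1))).sub (((hasDerivAt_id x).mul_const (log c)).add
    (((hasDerivAt_id x).const_sub 1).mul_const (log (1 - c)))))).sub
    ((((hasDerivAt_id x).sub_const c).pow 2).const_mul 2)
  exact h.congr_deriv (by simp; ring)

lemma pinskerGap_nonneg {a c : ℝ} (ha : a ∈ Icc (0 : ℝ) 1) (hc : c ∈ Ioo (0 : ℝ) 1) :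
    0 ≤ pinskerGap c a := by
  have hcc : pinskerGap c c = 0 := by simp [pinskerGap]
  -- the derivative `φ x - φ c` has the sign of `x - c` since `φ` is increasing
  set φ : ℝ → ℝ := fun x => log x - log (1 - x) - 4 * x
  rcases le_total a c with hac | hca
  · have hanti : AntitoneOn (pinskerGap c) (Icc 0 c) := by
      refine antitoneOn_of_hasDerivWithinAt_nonpos (f' := fun x => φ x - φ c) (convex_Icc 0 c)
        (continuous_pinskerGap c).continuousOn (fun x hx => ?_)
        (fun x hx => ?_) <;> rw [interior_Icc] at hx
      · rw [interior_Icc]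
        exact (hasDerivAt_pinskerGap c ⟨hx.1, hx.2.trans hc.2⟩).hasDerivWithinAt
      · exact sub_nonpos.2 <| monotoneOn_log_sub_log_one_sub_sub_four_mul
          ⟨hx.1, hx.2.trans hc.2⟩ hc hx.2.le
    simpa [hcc] using hanti ⟨ha.1, hac⟩ ⟨hc.1.le, le_rfl⟩ hac
  · have hmono : MonotoneOn (pinskerGap c) (Icc c 1) := by
      refine monotoneOn_of_hasDerivWithinAt_nonneg (f' := fun x => φ x - φ c) (convex_Icc c 1)
        (continuous_pinskerGap c).continuousOn (fun x hx => ?_)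
        (fun x hx => ?_) <;> rw [interior_Icc] at hx
      · rw [interior_Icc]
        exact (hasDerivAt_pinskerGap c ⟨hc.1.trans hx.1, hx.2⟩).hasDerivWithinAt
      · exact sub_nonneg.2 <| monotoneOn_log_sub_log_one_sub_sub_four_mul
          hc ⟨hc.1.trans hx.1, hx.2⟩ hx.1.le
    simpa [hcc] using hmono ⟨le_rfl, hc.2.le⟩ ⟨hca, ha.2⟩ hca

lemma mul_log_div_eq (a : ℝ) {c : ℝ} (hc : c ≠ 0) :
    a * log (a / c) = a * log a - a * log c := by
  rcases eq_or_ne a 0 with rfl | ha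
  · simp
  · rw [log_div ha hc, mul_sub]

theorem two_mul_sq_le_binaryKL {a c : ℝ} (ha : a ∈ Icc (0 : ℝ) 1)
    (hc : c ∈ Ioo (0 : ℝ) 1) :
    2 * (a - c) ^ 2 ≤ binaryKL a c := by
  have h := pinskerGap_nonneg ha hc
  rw [pinskerGap] at h
  rw [binaryKL, mul_log_div_eq a hc.1.ne', mul_log_div_eq (1 - a) (sub_pos.2 hc.2).ne']
  linarith

section Divergence

variable {α : Type*} [Fintype α]

lemma KL_eq_sum {p : α → ℝ} (hp : ∀ x, 0 ≤ p x) (q : α → ℝ) :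
    KL p q = ∑ x, p x * log (p x / q x) := by
  refine sum_congr rfl fun x _ => ?_
  rcases (hp x).eq_or_lt with h | h
  · simp [← h]
  · simp [h]

lemma binaryKL_le_KL {p m : α → ℝ} (hp : ∀ x, 0 ≤ p x) (hm : ∀ x, 0 ≤ m x)
    (hpm : ∀ x, 0 < p x → 0 < m x) (hp1 : ∑ x, p x = 1) (hm1 : ∑ x, m x = 1)
    (E : Finset α) :
    binaryKL (∑ x ∈ E, p x) (∑ x ∈ E, m x) ≤ KL p m := by
  classical
  have hpE : ∑ x ∈ Eᶜ, p x = 1 - ∑ x ∈ E, p x := by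
    rw [← hp1, ← sum_add_sum_compl E p, add_sub_cancel_left]
  have hmE : ∑ x ∈ Eᶜ, m x = 1 - ∑ x ∈ E, m x := by
    rw [← hm1, ← sum_add_sum_compl E m, add_sub_cancel_left]
  have hE := E.log_sum_inequality (fun x _ => hp x) (fun x _ => hm x) (fun x _ => hpm x)
  have hEc := Eᶜ.log_sum_inequality (fun x _ => hp x) (fun x _ => hm x) (fun x _ => hpm x)
  rw [hpE, hmE] at hEc
  rw [binaryKL, KL_eq_sum hp, ← sum_add_sum_compl E]
  exact add_le_add hE hEc

theorem abs_sum_sub_sum_le_sqrt_two_mul_JS {p q : α → ℝ} (hp : ∀ x, 0 ≤ p x)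
    (hq : ∀ x, 0 ≤ q x) (hp1 : ∑ x, p x = 1) (hq1 : ∑ x, q x = 1) (E : Finset α) :
    |∑ x ∈ E, p x - ∑ x ∈ E, q x| ≤ √(2 * JS p q) := by
  set a := ∑ x ∈ E, p x
  set b := ∑ x ∈ E, q x
  rcases eq_or_ne a b with hab | hab
  · simp [hab]
  have ha : a ∈ Icc (0 : ℝ) 1 :=
    ⟨sum_nonneg fun x _ => hp x, hp1 ▸ sum_le_univ_sum_of_nonneg hp⟩
  have hb : b ∈ Icc (0 : ℝ) 1 :=
    ⟨sum_nonneg fun x _ => hq x, hq1 ▸ sum_le_univ_sum_of_nonneg hq⟩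
  -- `a ≠ b` keeps the midpoint away from the endpoints, where `binaryKL` degenerates
  have hmid : (a + b) / 2 ∈ Ioo (0 : ℝ) 1 := by
    constructor
    · by_contra h; exact hab (by linarith [ha.1, hb.1])
    · by_contra h; exact hab (by linarith [ha.2, hb.2])
  set m : α → ℝ := fun x => (p x + q x) / 2
  have hm : ∀ x, 0 ≤ m x := fun x => by have := hp x; have := hq x; positivity
  have hm1 : ∑ x, m x = 1 := by
    simp only [m, ← sum_div, sum_add_distrib, hp1, hq1]
    norm_num
  have hmE : ∑ x ∈ E, m x = (a + b) / 2 := by simp only [m, ← sum_div, sum_add_distrib, a, b]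
  have hKLp : 2 * (a - (a + b) / 2) ^ 2 ≤ KL p m :=
    (two_mul_sq_le_binaryKL ha hmid).trans <| hmE ▸
      binaryKL_le_KL hp hm (fun x h => by have := hq x; simp only [m]; linarith) hp1 hm1 E
  have hKLq : 2 * (b - (a + b) / 2) ^ 2 ≤ KL q m :=
    (two_mul_sq_le_binaryKL hb hmid).trans <| hmE ▸
      binaryKL_le_KL hq hm (fun x h => by have := hp x; simp only [m]; linarith) hq1 hm1 E
  rw [← sqrt_sq_eq_abs]
  refine sqrt_le_sqrt ?_
  rw [JS]
  linarith

end Divergence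

section ConditionalLaw

variable {Ω α β : Type*} [Fintype Ω] (P : Ω → ℝ)

lemma pr_nonneg (hP : ∀ ω, 0 ≤ P ω) (E : Ω → Prop) : 0 ≤ pr P E := by
  classical
  exact sum_nonneg fun ω _ => ite_nonneg (hP ω) le_rfl

lemma pr_comp_and_eq_sum [Fintype α] (X : Ω → α) (T : α → Prop) [DecidablePred T]
    (U : Ω → Prop) :
    pr P (fun ω => T (X ω) ∧ U ω) =
      ∑ x ∈ univ.filter T, pr P (fun ω => X ω = x ∧ U ω) := by
  classical
  unfold pr
  rw [sum_comm]
  refine sum_congr rfl fun ω _ => ?_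
  by_cases hU : U ω <;> simp [hU]

noncomputable def condLaw (S : Ω → β) (X : Ω → α) (s : β) (x : α) : ℝ :=
  pr P (fun ω => X ω = x ∧ S ω = s) / pr P (fun ω => S ω = s)

variable (S : Ω → β) (X : Ω → α)

lemma condLaw_nonneg (hP : ∀ ω, 0 ≤ P ω) (s : β) (x : α) : 0 ≤ condLaw P S X s x :=
  div_nonneg (pr_nonneg P hP _) (pr_nonneg P hP _)

lemma sum_filter_condLaw [Fintype α] (T : α → Prop) [DecidablePred T] (s : β) :
    ∑ x ∈ univ.filter T, condLaw P S X s x =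
      pr P (fun ω => T (X ω) ∧ S ω = s) / pr P (fun ω => S ω = s) := by
  rw [pr_comp_and_eq_sum, sum_div]
  rfl

lemma sum_condLaw [Fintype α] {s : β} (hs : pr P (fun ω => S ω = s) ≠ 0) :
    ∑ x, condLaw P S X s x = 1 := by
  simpa [div_self hs] using sum_filter_condLaw P S X (fun _ => True) s

end ConditionalLaw

theorem stmt13_general {Ω α : Type*} [Fintype Ω] [Fintype α]
    (P : Ω → ℝ) (hP0 : ∀ ω, 0 ≤ P ω)
    (S : Ω → Fin 2) (hS : ∀ s, 0 < pr P (fun ω => S ω = s))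
    (X : Ω → α) (c : α → Fin 2) :
    |pr P (fun ω => c (X ω) = 1 ∧ S ω = 0) / pr P (fun ω => S ω = 0)
        - pr P (fun ω => c (X ω) = 1 ∧ S ω = 1) / pr P (fun ω => S ω = 1)| ≤
      Real.sqrt (2 *
        JS (fun x => pr P (fun ω => X ω = x ∧ S ω = 0) / pr P (fun ω => S ω = 0))
           (fun x => pr P (fun ω => X ω = x ∧ S ω = 1) / pr P (fun ω => S ω = 1))) := by
  have h := abs_sum_sub_sum_le_sqrt_two_mul_JS (condLaw_nonneg P S X hP0 0)
    (condLaw_nonneg P S X hP0 1) (sum_condLaw P S X (hS 0).ne') (sum_condLaw P S X (hS 1).ne')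
    (univ.filter fun x => c x = 1)
  rwa [sum_filter_condLaw, sum_filter_condLaw] at h

/-- the demographic disparity of any classifier is bounded by
`√(2·JS(p₀,p₁))` where `p_s` is the conditional law of `X` given `S = s`. -/
theorem stmt13 {Ω α : Type*} [Fintype Ω] [Fintype α]
    (P : Ω → ℝ) (hP0 : ∀ ω, 0 ≤ P ω) (hP1 : ∑ ω, P ω = 1)
    (S : Ω → Fin 2) (hS : ∀ s, 0 < pr P (fun ω => S ω = s))
    (X : Ω → α) (c : α → Fin 2) :
    |pr P (fun ω => c (X ω) = 1 ∧ S ω = 0) / pr P (fun ω => S ω = 0)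
        - pr P (fun ω => c (X ω) = 1 ∧ S ω = 1) / pr P (fun ω => S ω = 1)| ≤
      Real.sqrt (2 *
        JS (fun x => pr P (fun ω => X ω = x ∧ S ω = 0) / pr P (fun ω => S ω = 0))
           (fun x => pr P (fun ω => X ω = x ∧ S ω = 1) / pr P (fun ω => S ω = 1))) :=
  stmt13_general P hP0 S hS X c
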